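/- arXiv:math/0610726 — 2 statements merged into one kernel-verified Lean document; each statement's English description precedes it below -/
import Mathlib

section
/- Let R be a based ring and let M ⊆ R be the ℤ-span of a subset C of the basis B such that R_ad·M ⊆ M (i.e., M is a left based R_ad-submodule of R). Then M·R_ad ⊆ M; that is, every one-sided based R_ad-submodule of R is automatically an R_ad-subbimodule. Consequently, a based R_ad-subbimodule of R is indecomposable as a bimodule if and only if it is indecomposable as a left (equivalently, right) based R_ad-module. -/
/-- A *based ring* (fusion ring). -/
structure BasedRing (ι R : Type*) [Fintype ι] [DecidableEq ι] [Ring R] where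
  b : Module.Basis ι ℤ R
  unit : ι
  b_unit : b unit = 1
  star : ι → ι
  star_invol : ∀ i, star (star i) = i
  c_nonneg : ∀ i j k, 0 ≤ b.repr (b i * b j) k
  adj_right : ∀ i j k, b.repr (b i * b j) k = b.repr (b k * b (star j)) i
  adj_left : ∀ i j k, b.repr (b i * b j) k = b.repr (b (star i) * b k) j

namespace BasedRing

variable {ι R : Type*} [Fintype ι] [DecidableEq ι] [Ring R] (BR : BasedRing ι R)

/-- The element `I(1) = Σ_i X_i X_{i*}`. -/
noncomputable def I1 : R := ∑ i : ι, BR.b i * BR.b (BR.star i)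

/-- `x` (with nonnegative coordinates) *contains* the basic element `k`. -/
def contains (x : R) (k : ι) : Prop := 0 < BR.b.repr x k

/-- Index set of the adjoint subring `R_ad`: basic elements contained in some
power `I(1)^n`, `n ≥ 1`. -/
def adBasis : Set ι := {k | ∃ n : ℕ, 1 ≤ n ∧ BR.contains (BR.I1 ^ n) k}

/-- The adjoint subring `R_ad`, as the `ℤ`-span of the corresponding basic elements. -/
def adSub : Submodule ℤ R := Submodule.span ℤ (BR.b '' BR.adBasis)

/-- The `ℤ`-span of a set of basic elements. -/
def spanOf (C : Set ι) : Submodule ℤ R := Submodule.span ℤ (BR.b '' C)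

/-- `C` spans a left based `R_ad`-submodule of `R`. -/
def leftStable (C : Set ι) : Prop :=
  ∀ x ∈ BR.adSub, ∀ m ∈ BR.spanOf C, x * m ∈ BR.spanOf C

/-- `C` spans a right based `R_ad`-submodule of `R`. -/
def rightStable (C : Set ι) : Prop :=
  ∀ m ∈ BR.spanOf C, ∀ x ∈ BR.adSub, m * x ∈ BR.spanOf C

/-- Indecomposability of the span of `C` as a based module, with respect to a
given notion `P` of based submodule: `C` is nonempty, and in any partition of
`C` into two parts each spanning a `P`-submodule, one part is empty. -/
def indecompFor (P : Set ι → Prop) (C : Set ι) : Prop :=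
  C.Nonempty ∧ ∀ C₁ C₂ : Set ι, C₁ ∪ C₂ = C → Disjoint C₁ C₂ →
    P C₁ → P C₂ → C₁ = ∅ ∨ C₂ = ∅

end BasedRing

/-!
The element `I(1)` is central: by the adjointness identities, the `k`-th coordinate of both
`I(1) X_j` and `X_j I(1)` equals `Σ_{i,m} c_{im}^j c_{im}^k`. Since all coordinates involved are
nonnegative, "contains" passes through products: if `X_a ∈ R_ad` is contained in `I(1)^n` and
`X_k` is contained in `X_c X_a`, then `X_k` is contained in `X_c I(1)^n = I(1)^n X_c`, hence in
`X_m X_c` for some `X_m` contained in `I(1)^n`, i.e. some basic `X_m ∈ R_ad`. The same argument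
with the sides exchanged shows that left, right and two-sided based submodules coincide.
-/

lemma sum_mul_pos_iff_of_nonneg {α : Type*} [Fintype α] {f g : α → ℤ} (hf : 0 ≤ f) (hg : 0 ≤ g) :
    0 < ∑ m, f m * g m ↔ ∃ m, 0 < f m ∧ 0 < g m := by
  rw [Finset.sum_pos_iff_of_nonneg fun m _ => mul_nonneg (hf m) (hg m)]
  refine exists_congr fun m => ⟨fun ⟨_, h⟩ => ?_, fun h => ⟨Finset.mem_univ m, mul_pos h.1 h.2⟩⟩
  exact (pos_and_pos_or_neg_and_neg_of_mul_pos h).resolve_right fun hneg => (hf m).not_gt hneg.1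

namespace BasedRing

variable {ι R : Type*} [Fintype ι] [DecidableEq ι] [Ring R] (BR : BasedRing ι R)

lemma repr_mul (x y : R) (k : ι) :
    BR.b.repr (x * y) k = ∑ m, BR.b.repr x m * BR.b.repr (BR.b m * y) k := by
  conv_lhs => rw [← BR.b.sum_repr x]
  simp only [Finset.sum_mul, smul_mul_assoc, map_sum, map_smul, Finsupp.coe_finsetSum,
    Finset.sum_apply, Finsupp.smul_apply, smul_eq_mul]

lemma repr_basis_mul (i : ι) (x : R) (k : ι) :
    BR.b.repr (BR.b i * x) k = ∑ m, BR.b.repr x m * BR.b.repr (BR.b i * BR.b m) k := by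
  conv_lhs => rw [← BR.b.sum_repr x]
  simp only [Finset.mul_sum, mul_smul_comm, map_sum, map_smul, Finsupp.coe_finsetSum,
    Finset.sum_apply, Finsupp.smul_apply, smul_eq_mul]

def nonnegCone : Subsemiring R where
  carrier := {x | ∀ k, 0 ≤ BR.b.repr x k}
  zero_mem' k := by simp
  one_mem' k := by
    rw [← BR.b_unit, BR.b.repr_self, Finsupp.single_apply]
    split_ifs <;> norm_num
  add_mem' hx hy k := by
    rw [map_add, Finsupp.add_apply]
    exact add_nonneg (hx k) (hy k)
  mul_mem' {x y} hx hy k := by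
    rw [repr_mul]
    refine Finset.sum_nonneg fun m _ => mul_nonneg (hx m) ?_
    rw [repr_basis_mul]
    exact Finset.sum_nonneg fun p _ => mul_nonneg (hy p) (BR.c_nonneg m p k)

lemma I1_mem_nonnegCone : BR.I1 ∈ BR.nonnegCone :=
  sum_mem fun i _ k => BR.c_nonneg i (BR.star i) k

lemma repr_I1_mul_basis (j k : ι) :
    BR.b.repr (BR.I1 * BR.b j) k
      = ∑ i, ∑ m, BR.b.repr (BR.b i * BR.b m) j * BR.b.repr (BR.b i * BR.b m) k := by
  simp only [I1, Finset.sum_mul, map_sum, Finsupp.coe_finsetSum, Finset.sum_apply, mul_assoc]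
  refine Finset.sum_congr rfl fun i _ => ?_
  rw [repr_basis_mul]
  exact Finset.sum_congr rfl fun m _ => by rw [BR.adj_left i m j]

lemma repr_basis_mul_I1 (j k : ι) :
    BR.b.repr (BR.b j * BR.I1) k
      = ∑ i, ∑ m, BR.b.repr (BR.b i * BR.b m) j * BR.b.repr (BR.b i * BR.b m) k := by
  simp only [I1, Finset.mul_sum, map_sum, Finsupp.coe_finsetSum, Finset.sum_apply, ← mul_assoc]
  have h (i : ι) : BR.b.repr (BR.b j * BR.b i * BR.b (BR.star i)) k
      = ∑ m, BR.b.repr (BR.b m * BR.b (BR.star i)) j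
          * BR.b.repr (BR.b m * BR.b (BR.star i)) k := by
    rw [repr_mul]
    exact Finset.sum_congr rfl fun m _ => by rw [BR.adj_right j i m]
  rw [Finset.sum_congr rfl fun i _ => h i, Finset.sum_comm]
  exact Finset.sum_congr rfl fun m _ =>
    Equiv.sum_comp (Function.Involutive.toPerm _ BR.star_invol) fun i =>
      BR.b.repr (BR.b m * BR.b i) j * BR.b.repr (BR.b m * BR.b i) k

lemma I1_commute_basis (j : ι) : Commute BR.I1 (BR.b j) :=
  BR.b.repr.injective <| Finsupp.ext fun k => by rw [repr_I1_mul_basis, repr_basis_mul_I1]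

lemma contains_mul_basis_iff {z : R} (hz : z ∈ BR.nonnegCone) (c k : ι) :
    BR.contains (z * BR.b c) k ↔ ∃ m, BR.contains z m ∧ BR.contains (BR.b m * BR.b c) k := by
  rw [contains, repr_mul]
  exact sum_mul_pos_iff_of_nonneg hz fun m => BR.c_nonneg m c k

lemma contains_basis_mul_iff {z : R} (hz : z ∈ BR.nonnegCone) (c k : ι) :
    BR.contains (BR.b c * z) k ↔ ∃ m, BR.contains z m ∧ BR.contains (BR.b c * BR.b m) k := by
  rw [contains, repr_basis_mul]
  exact sum_mul_pos_iff_of_nonneg hz fun m => BR.c_nonneg c m k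

lemma exists_adBasis_left_of_contains_mul {a c k : ι} (ha : a ∈ BR.adBasis)
    (h : BR.contains (BR.b c * BR.b a) k) : ∃ m ∈ BR.adBasis, BR.contains (BR.b m * BR.b c) k := by
  obtain ⟨n, hn, hna⟩ := ha
  have hI : BR.I1 ^ n ∈ BR.nonnegCone := pow_mem BR.I1_mem_nonnegCone n
  have hcI : BR.contains (BR.b c * BR.I1 ^ n) k := (BR.contains_basis_mul_iff hI c k).2 ⟨a, hna, h⟩
  rw [← ((BR.I1_commute_basis c).pow_left n).eq, BR.contains_mul_basis_iff hI] at hcI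
  obtain ⟨m, hm, hmk⟩ := hcI
  exact ⟨m, ⟨n, hn, hm⟩, hmk⟩

lemma exists_adBasis_right_of_contains_mul {a c k : ι} (ha : a ∈ BR.adBasis)
    (h : BR.contains (BR.b a * BR.b c) k) : ∃ m ∈ BR.adBasis, BR.contains (BR.b c * BR.b m) k := by
  obtain ⟨n, hn, hna⟩ := ha
  have hI : BR.I1 ^ n ∈ BR.nonnegCone := pow_mem BR.I1_mem_nonnegCone n
  have hIc : BR.contains (BR.I1 ^ n * BR.b c) k := (BR.contains_mul_basis_iff hI c k).2 ⟨a, hna, h⟩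
  rw [((BR.I1_commute_basis c).pow_left n).eq, BR.contains_basis_mul_iff hI] at hIc
  obtain ⟨m, hm, hmk⟩ := hIc
  exact ⟨m, ⟨n, hn, hm⟩, hmk⟩

lemma mem_spanOf_iff {x : R} (hx : x ∈ BR.nonnegCone) (C : Set ι) :
    x ∈ BR.spanOf C ↔ ∀ k, BR.contains x k → k ∈ C := by
  rw [spanOf, Module.Basis.mem_span_image, Set.subset_def]
  exact forall_congr' fun k => by rw [Finset.mem_coe, Finsupp.mem_support_iff, contains,
    (hx k).lt_iff_ne', ne_comm]

lemma leftStable_iff (C : Set ι) : BR.leftStable C ↔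
    ∀ a ∈ BR.adBasis, ∀ c ∈ C, ∀ k, BR.contains (BR.b a * BR.b c) k → k ∈ C := by
  rw [leftStable, ← Submodule.mul_le, adSub, spanOf, Submodule.span_mul_span, Submodule.span_le,
    Set.mul_subset_iff]
  simp only [Set.forall_mem_image, SetLike.mem_coe]
  exact forall₂_congr fun a _ => forall₂_congr fun c _ =>
    BR.mem_spanOf_iff (BR.c_nonneg a c) C

lemma rightStable_iff (C : Set ι) : BR.rightStable C ↔
    ∀ c ∈ C, ∀ a ∈ BR.adBasis, ∀ k, BR.contains (BR.b c * BR.b a) k → k ∈ C := by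
  rw [rightStable, ← Submodule.mul_le, adSub, spanOf, Submodule.span_mul_span, Submodule.span_le,
    Set.mul_subset_iff]
  simp only [Set.forall_mem_image, SetLike.mem_coe]
  exact forall₂_congr fun c _ => forall₂_congr fun a _ =>
    BR.mem_spanOf_iff (BR.c_nonneg c a) C

theorem leftStable_iff_rightStable (C : Set ι) : BR.leftStable C ↔ BR.rightStable C := by
  rw [leftStable_iff, rightStable_iff]
  constructor
  · intro h c hc a ha k hk
    obtain ⟨m, hm, hmk⟩ := BR.exists_adBasis_left_of_contains_mul ha hk
    exact h m hm c hc k hmk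
  · intro h a ha c hc k hk
    obtain ⟨m, hm, hmk⟩ := BR.exists_adBasis_right_of_contains_mul ha hk
    exact h c hc m hm k hmk

end BasedRing

/-- If `M ⊆ R` is the `ℤ`-span of a subset `C` of the basis with
`R_ad · M ⊆ M`, then also `M · R_ad ⊆ M`: every one-sided based
`R_ad`-submodule of `R` is automatically an `R_ad`-subbimodule. Consequently, a
based `R_ad`-subbimodule of `R` is indecomposable as a bimodule if and only if
it is indecomposable as a left (equivalently, right) based `R_ad`-module. -/
theorem one_sided_submodule_is_bimodule {ι R : Type*} [Fintype ι] [DecidableEq ι]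
    [Ring R] (BR : BasedRing ι R) (C : Set ι) (hC : BR.leftStable C) :
    BR.rightStable C ∧
    (BasedRing.indecompFor (fun D => BR.leftStable D ∧ BR.rightStable D) C ↔
      BasedRing.indecompFor BR.leftStable C) ∧
    (BasedRing.indecompFor (fun D => BR.leftStable D ∧ BR.rightStable D) C ↔
      BasedRing.indecompFor BR.rightStable C) := by
  have hlr : BR.leftStable = BR.rightStable :=
    funext fun D => propext (BR.leftStable_iff_rightStable D)
  have hbi : (fun D => BR.leftStable D ∧ BR.rightStable D) = BR.leftStable := by
    simp only [hlr, and_self]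
  exact ⟨hlr ▸ hC, by rw [hbi], by rw [hbi, hlr]⟩
end

section
/- Let R be a based ring such that FPdim(R) is an odd integer. Then FPdim(X) is an integer for every basic element X of R. (In particular, a fusion category of odd integer Frobenius–Perron dimension has all its objects of integer Frobenius–Perron dimension.) -/
open Finset Polynomial ComplexOrder

lemma exists_ratCast_eq_of_forall_algHom_eq {E : Type*} [Field E] [Algebra ℚ E]
    [Algebra.IsAlgebraic ℚ E] {α : E} {c : ℂ} (h : ∀ σ : E →ₐ[ℚ] ℂ, σ α = c) :
    ∃ q : ℚ, α = q := by
  have hα : IsIntegral ℚ α := (Algebra.IsAlgebraic.isAlgebraic α).isIntegral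
  have hroots : ((minpoly ℚ α).rootSet ℂ).Subsingleton := by
    refine (Set.subsingleton_singleton (a := c)).anti fun y hy => ?_
    obtain ⟨σ, rfl⟩ := IntermediateField.exists_algHom_of_splits_of_aeval
      (fun s => ⟨(Algebra.IsAlgebraic.isAlgebraic s).isIntegral, IsAlgClosed.splits _⟩)
      ((mem_rootSet.mp hy).2)
    exact h σ
  have hdeg : (minpoly ℚ α).natDegree ≤ 1 := by
    rw [← card_rootSet_eq_natDegree (K := ℂ) (minpoly.irreducible hα).separable
      (IsAlgClosed.splits _)]
    exact Fintype.card_le_one_iff_subsingleton.mpr hroots.coe_sort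
  obtain ⟨q, hq⟩ := minpoly.natDegree_eq_one_iff.mp (hdeg.antisymm (minpoly.natDegree_pos hα))
  exact ⟨q, by simpa using hq.symm⟩

lemma exists_intCast_eq_of_forall_algHom_eq {E : Type*} [Field E] [Algebra ℚ E]
    [Algebra.IsAlgebraic ℚ E] {α : E} (hα : IsIntegral ℤ α) {c : ℂ}
    (h : ∀ σ : E →ₐ[ℚ] ℂ, σ α = c) : ∃ z : ℤ, α = z := by
  obtain ⟨q, rfl⟩ := exists_ratCast_eq_of_forall_algHom_eq h
  have hq : IsIntegral ℤ q :=
    (isIntegral_algebraMap_iff (algebraMap ℚ E).injective).mp (by simpa using hα)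
  obtain ⟨z, rfl⟩ := IsIntegrallyClosed.isIntegral_iff.mp hq
  exact ⟨z, by simp⟩

lemma sq_eq_sq_of_norm_le_of_sum_sq_eq {ι : Type*} [Fintype ι] {z : ι → ℂ} {d : ι → ℝ}
    (hz : ∀ i, ‖z i‖ ≤ d i) (hsum : ∑ i, z i ^ 2 = ∑ i, (d i : ℂ) ^ 2) (i : ι) :
    z i ^ 2 = (d i : ℂ) ^ 2 := by
  have hnorm : ∀ i, ‖z i ^ 2‖ ≤ d i ^ 2 := fun i =>
    norm_pow (z i) 2 ▸ pow_le_pow_left₀ (norm_nonneg _) (hz i) 2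
  have hre : (z i ^ 2).re = d i ^ 2 := by
    refine (sum_eq_sum_iff_of_le fun i _ => (Complex.re_le_norm _).trans (hnorm i)).mp ?_ i
      (mem_univ i)
    simpa [Complex.re_sum, ← Complex.ofReal_pow] using congrArg Complex.re hsum
  have hnonneg : 0 ≤ z i ^ 2 :=
    Complex.re_eq_norm.mp (le_antisymm (Complex.re_le_norm _) (hre ▸ hnorm i))
  exact Complex.ext (by simp [hre, ← Complex.ofReal_pow])
    (by simpa [← Complex.ofReal_pow] using (Complex.le_def.mp hnonneg).2.symm)

lemma even_sum_of_sum_mul_eq_zero {ι : Type*} [Fintype ι] {d : ι → ℝ} {z : ι → ℂ} {n : ι → ℤ}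
    (hn : ∀ i, d i ^ 2 = n i) (hz : ∀ i, z i ^ 2 = (d i : ℂ) ^ 2)
    (h : ∑ i, (d i : ℂ) * z i = 0) : Even (∑ i, n i) := by
  have hnC : ∀ i, (n i : ℂ) = (d i : ℂ) ^ 2 := fun i => by exact_mod_cast (hn i).symm
  have hterm : ∀ i, (n i : ℂ) - d i * z i = if z i = d i then 0 else 2 * (n i : ℂ) := by
    intro i
    split_ifs with hzi
    · rw [hzi, hnC]; ring
    · rw [(sq_eq_sq_iff_eq_or_eq_neg.mp (hz i)).resolve_left hzi, hnC]; ring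
  have hsum : ((∑ i, n i : ℤ) : ℂ) = ((2 * ∑ i with z i ≠ d i, n i : ℤ) : ℂ) := by
    calc ((∑ i, n i : ℤ) : ℂ) = ∑ i, ((n i : ℂ) - d i * z i) := by
          rw [sum_sub_distrib, h, sub_zero]; push_cast; rfl
      _ = _ := by rw [sum_congr rfl fun i _ => hterm i, sum_ite]; push_cast; simp [mul_sum]
  exact even_iff_two_dvd.mpr ⟨_, by exact_mod_cast hsum⟩

namespace BasedRing

variable {ι R : Type*} [Fintype ι] [DecidableEq ι] [Ring R] (BR : BasedRing ι R)

noncomputable def structConst (i j k : ι) : ℤ := BR.b.repr (BR.b i * BR.b j) k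

lemma map_basis_mul {S : Type*} [Ring S] (φ : R →+* S) (i j : ι) :
    φ (BR.b i) * φ (BR.b j) = ∑ k, (BR.structConst i j k : S) * φ (BR.b k) := by
  rw [← map_mul, ← BR.b.sum_repr (BR.b i * BR.b j), map_sum]
  simp [structConst, zsmul_eq_mul]

lemma sum_structConst_mul_map {S : Type*} [Ring S] (φ : R →+* S) (j k : ι) :
    ∑ i, (BR.structConst j i k : S) * φ (BR.b i) = φ (BR.b (BR.star j)) * φ (BR.b k) := by
  simp only [structConst, BR.adj_left j _ k]
  exact (BR.map_basis_mul φ _ _).symm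

lemma norm_map_basis_mul_le (χ : R →+* ℂ) (j k : ι) :
    ‖χ (BR.b j) * χ (BR.b k)‖ ≤ ∑ i, (BR.structConst j k i : ℝ) * ‖χ (BR.b i)‖ := by
  rw [BR.map_basis_mul]
  refine (norm_sum_le _ _).trans_eq (sum_congr rfl fun i _ => ?_)
  rw [norm_mul, Complex.norm_intCast, abs_of_nonneg (by exact_mod_cast BR.c_nonneg j k i)]

/-- Weighting the triangle inequality `‖χ X_j‖ ‖χ X_k‖ ≤ ∑ c_{jk}^i ‖χ X_i‖` by the positive
vector `d k = f (X k)` and using `∑ k, c_{jk}^i d k = d (j*) d i` gives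
`‖χ X_j‖ S ≤ d (j*) S` for `S = ∑ k, d k ‖χ X_k‖ > 0`. -/
theorem norm_map_basis_le (f : R →+* ℝ) (hf : ∀ i, 0 < f (BR.b i)) (χ : R →+* ℂ) (j : ι) :
    ‖χ (BR.b j)‖ ≤ f (BR.b (BR.star j)) := by
  set S := ∑ k, f (BR.b k) * ‖χ (BR.b k)‖
  have hS : 0 < S := by
    refine one_pos.trans_le ((single_le_sum (fun k _ => ?_) (mem_univ BR.unit)).trans_eq' ?_)
    · exact mul_nonneg (hf k).le (norm_nonneg _)
    · simp [BR.b_unit]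
  refine le_of_mul_le_mul_right ?_ hS
  calc ‖χ (BR.b j)‖ * S = ∑ k, f (BR.b k) * ‖χ (BR.b j) * χ (BR.b k)‖ := by
        simp only [S, mul_sum, norm_mul]; exact sum_congr rfl fun k _ => by ring
    _ ≤ ∑ k, f (BR.b k) * ∑ i, (BR.structConst j k i : ℝ) * ‖χ (BR.b i)‖ := by
        gcongr with k
        · exact (hf k).le
        · exact BR.norm_map_basis_mul_le χ j k
    _ = ∑ i, (∑ k, (BR.structConst j k i : ℝ) * f (BR.b k)) * ‖χ (BR.b i)‖ := by
        simp only [mul_sum, sum_mul]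
        rw [sum_comm]
        exact sum_congr rfl fun i _ => sum_congr rfl fun k _ => by ring
    _ = f (BR.b (BR.star j)) * S := by
        simp only [BR.sum_structConst_mul_map, S, mul_sum]
        exact sum_congr rfl fun i _ => by ring

theorem map_basis_star (f : R →+* ℝ) (hf : ∀ i, 0 < f (BR.b i)) (j : ι) :
    f (BR.b (BR.star j)) = f (BR.b j) := by
  have hle : ∀ j, f (BR.b j) ≤ f (BR.b (BR.star j)) := fun j => by
    simpa [abs_of_pos (hf j)] using BR.norm_map_basis_le f hf (Complex.ofRealHom.comp f) j
  exact le_antisymm (by simpa [BR.star_invol] using hle (BR.star j)) (hle j)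

theorem map_basis_sq_eq_of_sum_sq_eq (f : R →+* ℝ) (hf : ∀ i, 0 < f (BR.b i)) (χ : R →+* ℂ)
    (hsum : ∑ i, χ (BR.b i) ^ 2 = ∑ i, (f (BR.b i) : ℂ) ^ 2) (i : ι) :
    χ (BR.b i) ^ 2 = (f (BR.b i) : ℂ) ^ 2 :=
  sq_eq_sq_of_norm_le_of_sum_sq_eq (z := fun i => χ (BR.b i)) (d := fun i => f (BR.b i))
    (fun i => (BR.norm_map_basis_le f hf χ i).trans_eq (BR.map_basis_star f hf i)) hsum i

/-- `∑ i, d i * χ (X i)` is `χ` of the regular element `∑ i, d i • X i`, on which every `X j`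
acts by the scalar `d j`. -/
theorem map_basis_mul_sum_eq (f : R →+* ℝ) (hf : ∀ i, 0 < f (BR.b i)) (χ : R →+* ℂ) (j : ι) :
    χ (BR.b j) * ∑ i, (f (BR.b i) : ℂ) * χ (BR.b i) =
      f (BR.b j) * ∑ i, (f (BR.b i) : ℂ) * χ (BR.b i) := by
  have hFP (k : ι) : ∑ i, (BR.structConst j i k : ℂ) * f (BR.b i) = f (BR.b j) * f (BR.b k) := by
    simpa [BR.map_basis_star f hf] using BR.sum_structConst_mul_map (Complex.ofRealHom.comp f) j k
  calc χ (BR.b j) * ∑ i, (f (BR.b i) : ℂ) * χ (BR.b i)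
      = ∑ i, (f (BR.b i) : ℂ) * ∑ k, (BR.structConst j i k : ℂ) * χ (BR.b k) := by
        simp only [mul_sum, ← BR.map_basis_mul]
        exact sum_congr rfl fun i _ => by ring
    _ = ∑ k, (∑ i, (BR.structConst j i k : ℂ) * f (BR.b i)) * χ (BR.b k) := by
        simp only [mul_sum, sum_mul]
        rw [sum_comm]
        exact sum_congr rfl fun k _ => sum_congr rfl fun i _ => by ring
    _ = f (BR.b j) * ∑ i, (f (BR.b i) : ℂ) * χ (BR.b i) := by
        simp only [hFP, mul_sum]
        exact sum_congr rfl fun k _ => by ring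

theorem sum_mul_map_basis_eq_zero_of_ne (f : R →+* ℝ) (hf : ∀ i, 0 < f (BR.b i))
    (χ : R →+* ℂ) {j : ι} (hj : χ (BR.b j) ≠ f (BR.b j)) :
    ∑ i, (f (BR.b i) : ℂ) * χ (BR.b i) = 0 :=
  (mul_eq_zero.mp (by rw [sub_mul, BR.map_basis_mul_sum_eq f hf χ j, sub_self])).resolve_left
    (sub_ne_zero.mpr hj)

end BasedRing

/-- Let `R` be a based ring whose Frobenius–Perron dimension
`FPdim(R) = Σ_i FPdim(X_i)²` is an odd integer, where `FPdim = f` is the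
(unique) ring homomorphism `R → ℝ` positive on basic elements. Then
`FPdim(X)` is an integer for every basic element `X` of `R`. -/
theorem odd_FPdim_integral {ι R : Type*} [Fintype ι] [DecidableEq ι]
    [Ring R] (BR : BasedRing ι R) (f : R →+* ℝ) (hf : ∀ i, 0 < f (BR.b i))
    (hodd : ∃ m : ℤ, Odd m ∧ (∑ i : ι, (f (BR.b i)) ^ 2) = (m : ℝ)) :
    ∀ i, ∃ m : ℤ, f (BR.b i) = (m : ℝ) := by
  obtain ⟨m, hm_odd, hm⟩ := hodd
  have : Module.Finite ℤ R := .of_basis BR.b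
  let K := IntermediateField.adjoin ℚ (Set.range f)
  have : Algebra.IsAlgebraic ℚ K := IntermediateField.isAlgebraic_adjoin <| by
    rintro _ ⟨x, rfl⟩
    exact ((IsIntegral.of_finite ℤ x).map f.toIntAlgHom).tower_top
  let f' : R →+* K := f.codRestrict K fun x => IntermediateField.subset_adjoin ℚ _ ⟨x, rfl⟩
  have h_int_of_fixed (x : R) {c : ℂ} (h : ∀ σ : K →ₐ[ℚ] ℂ, σ (f' x) = c) : ∃ z : ℤ, f x = z :=
    have ⟨z, hz⟩ := exists_intCast_eq_of_forall_algHom_eq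
      ((IsIntegral.of_finite ℤ x).map f'.toIntAlgHom) h
    ⟨z, congrArg Subtype.val hz⟩
  have hsq (σ : K →ₐ[ℚ] ℂ) : ∀ i, σ (f' (BR.b i)) ^ 2 = (f (BR.b i) : ℂ) ^ 2 := by
    have hsum : ∑ i, f' (BR.b i) ^ 2 = m := Subtype.ext (by simpa [f'] using hm)
    refine BR.map_basis_sq_eq_of_sum_sq_eq f hf ((σ : K →+* ℂ).comp f') ?_
    calc ∑ i, σ (f' (BR.b i)) ^ 2 = σ (∑ i, f' (BR.b i) ^ 2) := by simp
      _ = ∑ i, (f (BR.b i) : ℂ) ^ 2 := by rw [hsum, map_intCast]; exact_mod_cast hm.symm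
  choose n hn using fun i =>
    h_int_of_fixed (BR.b i ^ 2) (c := (f (BR.b i) : ℂ) ^ 2) fun σ => by simp [hsq σ i]
  have hfix (σ : K →ₐ[ℚ] ℂ) (i : ι) : σ (f' (BR.b i)) = f (BR.b i) := by
    by_contra hi
    have horth := BR.sum_mul_map_basis_eq_zero_of_ne f hf ((σ : K →+* ℂ).comp f') hi
    have hm_sum : m = ∑ i, n i := by
      have : (m : ℝ) = ∑ i, (n i : ℝ) := by simp [← hm, ← hn]
      exact_mod_cast this
    exact Int.not_even_iff_odd.mpr hm_odd
      (hm_sum ▸ even_sum_of_sum_mul_eq_zero (by simpa using hn) (hsq σ) horth)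
  exact fun i => h_int_of_fixed _ (hfix · i)
end
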